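/- Let χ ∈ C²(Ω,ℝ). Define V₁ = ∂_z̄ + (∂_zχ)·C, V̄_conj = ∂_z − (∂_zχ)·C, P w = (Im w, Re w)ᵀ, and H = diag(H^{(0)}, H^{(2)}) with H^{(0)} = −Δ + Σ_k ((∂_kχ)² − ∂_k²χ), H^{(2)} = −Δ + Σ_k ((∂_kχ)² + ∂_k²χ). Then H P w = −4 P (V₁ V̄_conj w) for every twice continuously differentiable complex-valued function w on Ω. -/

import Mathlib

noncomputable section
open Complex

/-- ∂_x of a complex-valued function on ℂ ≅ ℝ². -/
def dx (w : ℂ → ℂ) : ℂ → ℂ := fun z => fderiv ℝ w z 1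

/-- ∂_y of a complex-valued function on ℂ ≅ ℝ². -/
def dy (w : ℂ → ℂ) : ℂ → ℂ := fun z => fderiv ℝ w z Complex.I

/-- ∂_z = (∂_x - i∂_y)/2. -/
def dz (w : ℂ → ℂ) : ℂ → ℂ := fun z => (dx w z - Complex.I * dy w z) / 2

/-- ∂_z̄ = (∂_x + i∂_y)/2. -/
def dzb (w : ℂ → ℂ) : ℂ → ℂ := fun z => (dx w z + Complex.I * dy w z) / 2

/-- A real-valued function viewed as complex-valued. -/
def cc (χ : ℂ → ℝ) : ℂ → ℂ := fun z => (χ z : ℂ)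

/-- V = ∂_z̄ - (∂_z̄χ)·C. -/
def Vop (χ : ℂ → ℝ) (w : ℂ → ℂ) : ℂ → ℂ :=
  fun z => dzb w z - dzb (cc χ) z * (starRingEnd ℂ) (w z)

/-- V̄ = ∂_z - (∂_zχ)·C. -/
def Vbar (χ : ℂ → ℝ) (w : ℂ → ℂ) : ℂ → ℂ :=
  fun z => dz w z - dz (cc χ) z * (starRingEnd ℂ) (w z)

/-- V₁ = ∂_z̄ + (∂_zχ)·C. -/
def V1 (χ : ℂ → ℝ) (w : ℂ → ℂ) : ℂ → ℂ :=
  fun z => dzb w z + dz (cc χ) z * (starRingEnd ℂ) (w z)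

/-- V̄₁ = ∂_z + (∂_z̄χ)·C. -/
def Vbar1 (χ : ℂ → ℝ) (w : ℂ → ℂ) : ℂ → ℂ :=
  fun z => dz w z + dzb (cc χ) z * (starRingEnd ℂ) (w z)

/-- Partial derivative ∂_i of a real-valued function on ℂ ≅ ℝ². -/
def pdc (i : Fin 2) (f : ℂ → ℝ) : ℂ → ℝ :=
  fun z => fderiv ℝ f z (if i = 0 then 1 else Complex.I)

/-- H^{(0)} = -Δ + Σ_k ((∂_kχ)² - ∂_k²χ) acting on real functions on ℂ. -/
def H0c (χ f : ℂ → ℝ) : ℂ → ℝ := fun z =>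
  -(pdc 0 (pdc 0 f) z + pdc 1 (pdc 1 f) z) +
    (∑ k : Fin 2, ((pdc k χ z) ^ 2 - pdc k (pdc k χ) z)) * f z

/-- H^{(2)} = -Δ + Σ_k ((∂_kχ)² + ∂_k²χ). -/
def H2c (χ f : ℂ → ℝ) : ℂ → ℝ := fun z =>
  -(pdc 0 (pdc 0 f) z + pdc 1 (pdc 1 f) z) +
    (∑ k : Fin 2, ((pdc k χ z) ^ 2 + pdc k (pdc k χ) z)) * f z

/-- H^{(1)}_{ij} = δ_{ij} H^{(0)} + 2∂_i∂_jχ. -/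
def H1c (χ : ℂ → ℝ) (i j : Fin 2) (f : ℂ → ℝ) : ℂ → ℝ := fun z =>
  (if i = j then H0c χ f z else 0) + 2 * pdc i (pdc j χ) z * f z

/-!
By the Leibniz rule and `∂_z̄ (C w) = C (∂_z w)`, the first-order terms of `V₁ V̄ w` cancel, leaving
`V₁ V̄ w = ∂_z̄∂_z w - (∂_z̄∂_z χ) w̄ - |∂_z χ|² w`. With `4 ∂_z̄∂_z = Δ` and `4 |∂_z χ|² = |∇χ|²`,
this says `-4 V₁ V̄ w = -Δw + (Δχ) w̄ + |∇χ|² w`; the conjugate flips the sign of the `Δχ` term in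
the imaginary part, which produces `H^{(0)}` on `Im w` and `H^{(2)}` on `Re w`.
-/

open ComplexConjugate

section Calculus

variable {E F G : Type*} [NormedAddCommGroup E] [NormedSpace ℝ E] [NormedAddCommGroup F]
  [NormedSpace ℝ F] [NormedAddCommGroup G] [NormedSpace ℝ G] {f : E → F} {z : E}

theorem fderiv_clm_comp_apply (L : F →L[ℝ] G) (hf : DifferentiableAt ℝ f z) (v : E) :
    fderiv ℝ (fun y => L (f y)) z v = L (fderiv ℝ f z v) := by
  change fderiv ℝ (L ∘ f) z v = _
  rw [(L.hasFDerivAt.comp z hf.hasFDerivAt).fderiv]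
  rfl

theorem ContDiffAt.differentiableAt_fderiv (hf : ContDiffAt ℝ 2 f z) :
    DifferentiableAt ℝ (fderiv ℝ f) z :=
  (hf.fderiv_right (m := 1) (by norm_num)).differentiableAt one_ne_zero

theorem ContDiffAt.differentiableAt_fderiv_apply (hf : ContDiffAt ℝ 2 f z) (v : E) :
    DifferentiableAt ℝ (fun y => fderiv ℝ f y v) z :=
  hf.differentiableAt_fderiv.clm_apply (differentiableAt_const v)

theorem fderiv_fderiv_apply (hf : ContDiffAt ℝ 2 f z) (u v : E) :
    fderiv ℝ (fun y => fderiv ℝ f y v) z u = fderiv ℝ (fderiv ℝ f) z u v := by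
  rw [fderiv_clm_apply hf.differentiableAt_fderiv (differentiableAt_const v)]
  simp

theorem fderiv_fderiv_clm_comp_apply (L : F →L[ℝ] G) (hf : ContDiffAt ℝ 2 f z) (u v : E) :
    fderiv ℝ (fun y => fderiv ℝ (fun x => L (f x)) y v) z u =
      L (fderiv ℝ (fun y => fderiv ℝ f y v) z u) := by
  have hL : (fun y => fderiv ℝ (fun x => L (f x)) y v) =ᶠ[nhds z] fun y => L (fderiv ℝ f y v) := by
    filter_upwards [hf.eventually (by simp)] with y hy
    exact fderiv_clm_comp_apply L (hy.differentiableAt two_ne_zero) v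
  rw [hL.fderiv_eq, fderiv_clm_comp_apply L (hf.differentiableAt_fderiv_apply v)]

end Calculus

section Wirtinger

variable {f g : ℂ → ℂ} {z : ℂ}

theorem dzb_sub (hf : DifferentiableAt ℝ f z) (hg : DifferentiableAt ℝ g z) :
    dzb (fun y => f y - g y) z = dzb f z - dzb g z := by
  simp only [dzb, dx, dy, fderiv_fun_sub hf hg, sub_apply]
  ring

theorem dzb_mul (hf : DifferentiableAt ℝ f z) (hg : DifferentiableAt ℝ g z) :
    dzb (fun y => f y * g y) z = dzb f z * g z + f z * dzb g z := by
  simp only [dzb, dx, dy, fderiv_fun_mul hf hg, add_apply, smul_apply, smul_eq_mul]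
  ring

theorem dzb_conj : dzb (fun y => conj (f y)) z = conj (dz f z) := by
  have h := fderiv_star (𝕜 := ℝ) (f := f) (x := z)
  simp only [star_def] at h
  simp only [dzb, dz, dx, dy, h]
  simp [map_ofNat]

theorem ContDiffAt.differentiableAt_dx (hf : ContDiffAt ℝ 2 f z) : DifferentiableAt ℝ (dx f) z :=
  hf.differentiableAt_fderiv_apply 1

theorem ContDiffAt.differentiableAt_dy (hf : ContDiffAt ℝ 2 f z) : DifferentiableAt ℝ (dy f) z :=
  hf.differentiableAt_fderiv_apply I

theorem ContDiffAt.differentiableAt_dz (hf : ContDiffAt ℝ 2 f z) :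
    DifferentiableAt ℝ (dz f) z := by
  have := hf.differentiableAt_dx
  have := hf.differentiableAt_dy
  unfold dz
  fun_prop

theorem fderiv_dz_apply (hf : ContDiffAt ℝ 2 f z) (v : ℂ) :
    fderiv ℝ (dz f) z v = (fderiv ℝ (dx f) z v - I * fderiv ℝ (dy f) z v) / 2 := by
  have hx := hf.differentiableAt_dx
  have hy := hf.differentiableAt_dy
  have hdz : dz f = fun y => (dx f y - I * dy f y) * 2⁻¹ := by
    ext y
    simp only [dz, div_eq_mul_inv]
  rw [hdz, fderiv_mul_const (hx.fun_sub (hy.const_mul I)), fderiv_fun_sub hx (hy.const_mul I),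
    fderiv_const_mul hy]
  simp only [smul_apply, sub_apply, smul_eq_mul]
  ring

theorem dy_dx_eq_dx_dy (hf : ContDiffAt ℝ 2 f z) : dy (dx f) z = dx (dy f) z := by
  change fderiv ℝ (fun y => fderiv ℝ f y 1) z I = fderiv ℝ (fun y => fderiv ℝ f y I) z 1
  rw [fderiv_fderiv_apply hf, fderiv_fderiv_apply hf]
  exact hf.isSymmSndFDerivAt (by simp [minSmoothness_of_isRCLikeNormedField]) I 1

theorem four_mul_dzb_dz (hf : ContDiffAt ℝ 2 f z) :
    4 * dzb (dz f) z = dx (dx f) z + dy (dy f) z := by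
  have hx : dx (dz f) z = (dx (dx f) z - I * dx (dy f) z) / 2 := fderiv_dz_apply hf 1
  have hy : dy (dz f) z = (dy (dx f) z - I * dy (dy f) z) / 2 := fderiv_dz_apply hf I
  rw [dzb, hx, hy, dy_dx_eq_dx_dy hf]
  linear_combination (-dy (dy f) z) * I_sq

end Wirtinger

section Factorization

variable {χ : ℂ → ℝ} {w : ℂ → ℂ} {z : ℂ}

theorem ContDiffAt.cc (hχ : ContDiffAt ℝ 2 χ z) : ContDiffAt ℝ 2 (cc χ) z :=
  ofRealCLM.contDiff.contDiffAt.comp z hχ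

theorem dz_cc (hχ : DifferentiableAt ℝ χ z) :
    dz (cc χ) z = ((pdc 0 χ z : ℂ) - I * (pdc 1 χ z : ℂ)) / 2 := by
  simp only [dz, dx, dy, show cc χ = fun y => ofRealCLM (χ y) from rfl]
  rw [fderiv_clm_comp_apply ofRealCLM hχ, fderiv_clm_comp_apply ofRealCLM hχ]
  rfl

theorem four_mul_normSq_dz_cc (hχ : DifferentiableAt ℝ χ z) :
    4 * normSq (dz (cc χ) z) = pdc 0 χ z ^ 2 + pdc 1 χ z ^ 2 := by
  rw [dz_cc hχ, normSq_apply]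
  simp only [div_ofNat_re, sub_re, ofReal_re, mul_re, I_re, zero_mul, I_im, ofReal_im, mul_zero,
    sub_self, sub_zero, div_ofNat_im, sub_im, mul_im, one_mul, zero_add, zero_sub]
  ring

theorem laplacian_cc (hχ : ContDiffAt ℝ 2 χ z) :
    dx (dx (cc χ)) z + dy (dy (cc χ)) z = ((pdc 0 (pdc 0 χ) z + pdc 1 (pdc 1 χ) z : ℝ) : ℂ) := by
  rw [ofReal_add]
  congr 1
  · exact fderiv_fderiv_clm_comp_apply ofRealCLM hχ 1 1
  · exact fderiv_fderiv_clm_comp_apply ofRealCLM hχ I I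

theorem laplacian_clm_comp (L : ℂ →L[ℝ] ℝ) (hw : ContDiffAt ℝ 2 w z) :
    pdc 0 (pdc 0 fun y => L (w y)) z + pdc 1 (pdc 1 fun y => L (w y)) z =
      L (dx (dx w) z + dy (dy w) z) := by
  rw [map_add]
  congr 1
  · exact fderiv_fderiv_clm_comp_apply L hw 1 1
  · exact fderiv_fderiv_clm_comp_apply L hw I I

theorem V1_Vbar_apply (hχ : ContDiffAt ℝ 2 χ z) (hw : ContDiffAt ℝ 2 w z) :
    V1 χ (Vbar χ w) z =
      dzb (dz w) z - dzb (dz (cc χ)) z * conj (w z) - normSq (dz (cc χ) z) * w z := by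
  have hwd : DifferentiableAt ℝ w z := hw.differentiableAt two_ne_zero
  have hconj : DifferentiableAt ℝ (fun y => conj (w y)) z := hwd.star
  have hdzb : dzb (Vbar χ w) z =
      dzb (dz w) z - (dzb (dz (cc χ)) z * conj (w z) + dz (cc χ) z * conj (dz w z)) := by
    unfold Vbar
    rw [dzb_sub hw.differentiableAt_dz (hχ.cc.differentiableAt_dz.fun_mul hconj),
      dzb_mul hχ.cc.differentiableAt_dz hconj, dzb_conj]
  simp only [V1, hdzb, Vbar, map_sub, map_mul, conj_conj]
  linear_combination -(w z) * mul_conj (dz (cc χ) z)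

theorem neg_four_mul_V1_Vbar (hχ : ContDiffAt ℝ 2 χ z) (hw : ContDiffAt ℝ 2 w z) :
    -4 * V1 χ (Vbar χ w) z =
      -(dx (dx w) z + dy (dy w) z) +
        ((pdc 0 (pdc 0 χ) z + pdc 1 (pdc 1 χ) z : ℝ) : ℂ) * conj (w z) +
        ((pdc 0 χ z ^ 2 + pdc 1 χ z ^ 2 : ℝ) : ℂ) * w z := by
  rw [V1_Vbar_apply hχ hw, ← laplacian_cc hχ, ← four_mul_dzb_dz hw, ← four_mul_dzb_dz hχ.cc,
    ← four_mul_normSq_dz_cc (hχ.differentiableAt two_ne_zero)]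
  push_cast
  ring

theorem H0c_im_eq_neg_four_mul (hχ : ContDiffAt ℝ 2 χ z) (hw : ContDiffAt ℝ 2 w z) :
    H0c χ (fun ζ => (w ζ).im) z = -4 * (V1 χ (Vbar χ w) z).im := by
  have hV := congrArg im (neg_four_mul_V1_Vbar hχ hw)
  have hlap := laplacian_clm_comp imCLM hw
  simp only [add_im, neg_im, im_ofReal_mul, conj_im] at hV
  simp only [mul_im, neg_re, re_ofNat, neg_im, im_ofNat, neg_zero, zero_mul, add_zero] at hV
  simp only [imCLM_apply, add_im] at hlap
  simp only [H0c, Fin.sum_univ_two]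
  linear_combination -hV - hlap

theorem H2c_re_eq_neg_four_mul (hχ : ContDiffAt ℝ 2 χ z) (hw : ContDiffAt ℝ 2 w z) :
    H2c χ (fun ζ => (w ζ).re) z = -4 * (V1 χ (Vbar χ w) z).re := by
  have hV := congrArg re (neg_four_mul_V1_Vbar hχ hw)
  have hlap := laplacian_clm_comp reCLM hw
  simp only [add_re, neg_re, re_ofReal_mul, conj_re] at hV
  simp only [mul_re, neg_re, re_ofNat, neg_im, im_ofNat, neg_zero, zero_mul, sub_zero] at hV
  simp only [reCLM_apply, add_re] at hlap
  simp only [H2c, Fin.sum_univ_two]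
  linear_combination -hV - hlap

end Factorization

/-- H P w = -4 P (V₁ V̄ w) for every C² complex-valued function w. -/
theorem H_P_factorization (Ω : Set ℂ) (hΩ : IsOpen Ω)
    (χ : ℂ → ℝ) (hχ : ContDiffOn ℝ 2 χ Ω)
    (w : ℂ → ℂ) (hw : ContDiffOn ℝ 2 w Ω) :
    ∀ z ∈ Ω,
      H0c χ (fun ζ => (w ζ).im) z = -4 * (V1 χ (Vbar χ w) z).im ∧
      H2c χ (fun ζ => (w ζ).re) z = -4 * (V1 χ (Vbar χ w) z).re := by
  intro z hz
  have hχz := hχ.contDiffAt (hΩ.mem_nhds hz)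
  have hwz := hw.contDiffAt (hΩ.mem_nhds hz)
  exact ⟨H0c_im_eq_neg_four_mul hχz hwz, H2c_re_eq_neg_four_mul hχz hwz⟩
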